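/- Let G be the dicyclic group of order 12 and fix a splitting Z/4Z → G with image generated by b. Suppose ρ is a representation of G on an n-dimensional vector space V over an algebraically closed field of characteristic 0 (or any field containing a primitive 4th root of unity ζ, with 2 invertible) such that ρ(b) has eigenvalue ζ with multiplicity 1 and eigenvalue 1 with multiplicity n-1 (and ρ(b) is diagonalizable). Then V splits as a direct sum of an (n-1)-dimensional trivial G-representation and a 1-dimensional representation on which G acts through the character sending b to ζ. -/
import Mathlib

open Module

namespace Dic12Aux

open QuaternionGroup

variable {k : Type*} [Field k]

/-- Sign map `ZMod 6 → kˣ`, `i ↦ (-1)^i`. -/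
def E (k : Type*) [Field k] (i : ZMod 6) : kˣ := (-1) ^ i.val

lemma E_add (i j : ZMod 6) : E k (i + j) = E k i * E k j := by
  unfold E
  rw [ZMod.val_add, ← pow_add]
  conv_rhs => rw [← Nat.mod_add_div (i.val + j.val) 6]
  rw [pow_add, pow_mul]
  have h6 : ((-1 : kˣ)) ^ 6 = 1 := by
    rw [show (6 : ℕ) = 2 * 3 from rfl, pow_mul, neg_one_sq, one_pow]
  rw [h6, one_pow, mul_one]

lemma E_mul_self (i : ZMod 6) : E k i * E k i = 1 := by
  unfold E; rw [← pow_add, ← two_mul, pow_mul, neg_one_sq, one_pow]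

lemma E_zero : E k 0 = 1 := by unfold E; norm_num

lemma E_neg (i : ZMod 6) : E k (-i) = E k i := by
  have h : E k i * E k (-i) = 1 := by rw [← E_add]; simp [E_zero]
  calc E k (-i) = E k i * E k i * E k (-i) := by rw [E_mul_self, one_mul]
  _ = E k i := by rw [mul_assoc, h, mul_one]

lemma E_sub (i j : ZMod 6) : E k (i - j) = E k i * E k j := by
  rw [sub_eq_add_neg, E_add, E_neg]

/-- The character of `QuaternionGroup 3` sending `a i ↦ (-1)^i`, `xa i ↦ (-1)^i * u`,
where `u` is a primitive 4th root of unity. -/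
def chi (u : kˣ) (hu : u * u = -1) : QuaternionGroup 3 →* kˣ :=
  MonoidHom.mk' (fun g => match g with
    | .a i => E k i
    | .xa i => E k i * u)
    (by
      rintro (i | i) (j | j)
      · show E k (i + j) = E k i * E k j
        exact E_add i j
      · show E k (j - i) * u = E k i * (E k j * u)
        rw [E_sub]
        simp [mul_comm, mul_left_comm, mul_assoc]
      · show E k (i + j) * u = E k i * u * E k j
        rw [E_add]
        simp [mul_comm, mul_left_comm, mul_assoc]
      · show E k ((3 : ZMod 6) + j - i) = E k i * u * (E k j * u)
        have h3 : E k 3 = -1 := by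
          unfold E
          rw [show ((3 : ZMod 6)).val = 3 from rfl, pow_succ, neg_one_sq, one_mul]
        rw [E_sub, E_add, h3]
        have he : E k i * u * (E k j * u) = E k i * E k j * (u * u) := by
          simp [mul_comm, mul_left_comm, mul_assoc]
        rw [he, hu]
        simp [mul_comm, mul_left_comm, mul_assoc])

end Dic12Aux

open Dic12Aux QuaternionGroup

/-- Let `G` be the dicyclic group of order 12 (`QuaternionGroup 3`) and let
`b = xa 0` be a generator of a `ℤ/4ℤ` complement.  Suppose `ρ` is a representation of
`G` on an `n`-dimensional vector space `V` over a field `k` containing a primitive 4th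
root of unity `ζ` (with `2 ≠ 0` in `k`), such that `ρ b` is diagonalizable with
eigenvalue `ζ` of multiplicity 1 and eigenvalue `1` of multiplicity `n - 1`.  Then `V`
splits as a direct sum of an `(n-1)`-dimensional trivial `G`-representation and a
1-dimensional representation on which `G` acts through the character sending `b` to
`ζ`. -/
theorem dicyclic12_rep_splits_trivial_plus_character
    (k : Type*) [Field k] (ζ : k) (hζ : IsPrimitiveRoot ζ 4) (h2 : (2 : k) ≠ 0)
    (V : Type*) [AddCommGroup V] [Module k V] [FiniteDimensional k V]
    (ρ : Representation k (QuaternionGroup 3) V)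
    (b : QuaternionGroup 3) (hb : b = QuaternionGroup.xa (0 : ZMod (2 * 3)))
    (hdiag : Module.End.eigenspace (ρ b) ζ ⊔ Module.End.eigenspace (ρ b) 1 = ⊤)
    (hζmult : finrank k (Module.End.eigenspace (ρ b) ζ) = 1)
    (h1mult : finrank k (Module.End.eigenspace (ρ b) 1) = finrank k V - 1) :
    ∃ W₁ W₂ : Submodule k V,
      IsCompl W₁ W₂ ∧
      finrank k W₁ = finrank k V - 1 ∧
      finrank k W₂ = 1 ∧
      (∀ g : QuaternionGroup 3, ∀ v ∈ W₁, ρ g v = v) ∧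
      (∃ χ : QuaternionGroup 3 →* kˣ,
        (χ b : k) = ζ ∧ ∀ g : QuaternionGroup 3, ∀ v ∈ W₂, ρ g v = (χ g : k) • v) := by
  subst hb
  -- scalar facts
  have hζ0 : ζ ≠ 0 := hζ.ne_zero (by norm_num)
  have hζ1 : ζ ≠ 1 := hζ.ne_one (by norm_num)
  have hζ2 : ζ * ζ = -1 := by
    have h4 : ζ ^ 4 = 1 := hζ.pow_eq_one
    have hne : ζ ^ 2 ≠ 1 := hζ.pow_ne_one_of_pos_of_lt (by norm_num) (by norm_num)
    have hz : (ζ ^ 2 - 1) * (ζ ^ 2 + 1) = 0 := by linear_combination h4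
    rcases mul_eq_zero.1 hz with h | h
    · exact absurd (sub_eq_zero.1 h) hne
    · have h' : ζ ^ 2 = -1 := eq_neg_of_add_eq_zero_left h
      calc ζ * ζ = ζ ^ 2 := (sq ζ).symm
      _ = -1 := h'
  -- notation
  set G := QuaternionGroup 3
  set B := ρ (xa 0) with hB
  set A := ρ (QuaternionGroup.a 1) with hA
  set W1 := Module.End.eigenspace (ρ (xa 0)) 1 with hW1
  set Wζ := Module.End.eigenspace (ρ (xa 0)) ζ with hWζ
  have rmul : ∀ (g h : G) (v : V), ρ (g * h) v = ρ g (ρ h v) := by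
    intro g h v; rw [map_mul]; rfl
  have mem1 : ∀ v : V, v ∈ W1 ↔ B v = v := by
    intro v; rw [hW1, Module.End.mem_eigenspace_iff, one_smul]
  have memζ : ∀ v : V, v ∈ Wζ ↔ B v = ζ • v := by
    intro v; rw [hWζ, Module.End.mem_eigenspace_iff]
  -- group relations
  have g1 : (xa 0 : G) * QuaternionGroup.a 1 = QuaternionGroup.a 5 * xa 0 := by decide
  have g2 : (QuaternionGroup.a 1 : G) * QuaternionGroup.a 5 = 1 := by decide
  have g3 : (xa 0 : G) * xa 0 = QuaternionGroup.a 3 := by decide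
  have g4 : (QuaternionGroup.a 1 : G) * QuaternionGroup.a 1 * QuaternionGroup.a 1
      = QuaternionGroup.a 3 := by decide
  have g5 : (QuaternionGroup.a 3 : G) * QuaternionGroup.a 1
      = QuaternionGroup.a 1 * QuaternionGroup.a 3 := by decide
  -- action of a 3 = b^2
  have ha3_1 : ∀ v ∈ W1, ρ (QuaternionGroup.a 3) v = v := by
    intro v hv
    rw [← g3, rmul, (mem1 v).1 hv, (mem1 v).1 hv]
  have ha3_ζ : ∀ v ∈ Wζ, ρ (QuaternionGroup.a 3) v = -v := by
    intro v hv
    rw [← g3, rmul, (memζ v).1 hv, map_smul, (memζ v).1 hv, smul_smul, hζ2, neg_one_smul]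
  -- decomposition
  have hdec : ∀ v : V, ∃ x ∈ Wζ, ∃ y ∈ W1, x + y = v := by
    intro v
    have : v ∈ Wζ ⊔ W1 := by rw [hdiag]; exact Submodule.mem_top
    exact Submodule.mem_sup.1 this
  -- A commutes with ρ (a 3)
  have hcomm : ∀ v : V, ρ (QuaternionGroup.a 3) (A v) = A (ρ (QuaternionGroup.a 3) v) := by
    intro v; rw [hA, ← rmul, g5, rmul]
  -- A preserves W1 and Wζ
  have hA1mem : ∀ v ∈ W1, A v ∈ W1 := by
    intro v hv
    obtain ⟨x, hx, y, hy, hxy⟩ := hdec (A v)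
    have h3 : ρ (QuaternionGroup.a 3) (A v) = A v := by rw [hcomm, ha3_1 v hv]
    rw [← hxy, map_add, ha3_ζ x hx, ha3_1 y hy] at h3
    have hx0 : x = 0 := by
      have hxx : -x = x := add_right_cancel h3
      have hsum : x + x = 0 := by
        calc x + x = -x + x := by rw [hxx]
        _ = 0 := neg_add_cancel x
      have h2x : (2 : k) • x = 0 := by rw [two_smul]; exact hsum
      exact (smul_eq_zero.1 h2x).resolve_left h2
    rw [← hxy, hx0, zero_add]; exact hy
  have hAζmem : ∀ v ∈ Wζ, A v ∈ Wζ := by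
    intro v hv
    obtain ⟨x, hx, y, hy, hxy⟩ := hdec (A v)
    have h3 : ρ (QuaternionGroup.a 3) (A v) = -A v := by
      rw [hcomm, ha3_ζ v hv, map_neg]
    rw [← hxy, map_add, ha3_ζ x hx, ha3_1 y hy, neg_add] at h3
    have hy0 : y = 0 := by
      have hyy : -y = y := (add_left_cancel h3).symm
      have hsum : y + y = 0 := by
        calc y + y = -y + y := by rw [hyy]
        _ = 0 := neg_add_cancel y
      have h2y : (2 : k) • y = 0 := by rw [two_smul]; exact hsum
      exact (smul_eq_zero.1 h2y).resolve_left h2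
    rw [← hxy, hy0, add_zero]; exact hx
  -- A v = ρ (a 5) v on W1 and Wζ
  have key1 : ∀ v ∈ W1, A v = ρ (QuaternionGroup.a 5) v := by
    intro v hv
    have h := (mem1 (A v)).1 (hA1mem v hv)
    -- B (A v) = ρ (a 5) (B v) = ρ (a 5) v
    rw [hB, hA, ← rmul, g1, rmul, (mem1 v).1 hv] at h
    exact h.symm
  have keyζ : ∀ v ∈ Wζ, A v = ρ (QuaternionGroup.a 5) v := by
    intro v hv
    have h := (memζ (A v)).1 (hAζmem v hv)
    rw [hB, hA, ← rmul, g1, rmul, (memζ v).1 hv, map_smul] at h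
    exact (smul_right_injective V hζ0 h).symm
  -- A acts as identity on W1
  have hAsq : ∀ v, A (ρ (QuaternionGroup.a 5) v) = v := by
    intro v; rw [hA, ← rmul, g2, map_one]; rfl
  have hA1id : ∀ v ∈ W1, A v = v := by
    intro v hv
    have h3 : A (A (A v)) = v := by
      rw [hA, ← rmul, ← rmul, g4, ha3_1 v hv]
    have h1 : A (A v) = v := by rw [key1 v hv, hAsq]
    have h2' : A (A (A v)) = A v := by
      rw [key1 (A v) (hA1mem v hv), hAsq]
    rw [h2'] at h3; exact h3
  have hAζneg : ∀ v ∈ Wζ, A v = -v := by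
    intro v hv
    have h3 : A (A (A v)) = -v := by
      rw [hA, ← rmul, ← rmul, g4, ha3_ζ v hv]
    have h2' : A (A (A v)) = A v := by
      rw [keyζ (A v) (hAζmem v hv), hAsq]
    rw [h2'] at h3; exact h3
  -- action of powers of a 1
  have hpow1 : ∀ (m : ℕ), ∀ v ∈ W1, ρ ((QuaternionGroup.a 1 : G) ^ m) v = v := by
    intro m
    induction m with
    | zero => intro v _; rw [pow_zero, map_one]; rfl
    | succ m ih =>
      intro v hv
      rw [pow_succ', rmul, ih v hv]
      exact hA1id v hv
  have hpowζ : ∀ (m : ℕ), ∀ v ∈ Wζ, ρ ((QuaternionGroup.a 1 : G) ^ m) v = ((-1 : k) ^ m) • v := by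
    intro m
    induction m with
    | zero => intro v _; rw [pow_zero, map_one, pow_zero, one_smul]; rfl
    | succ m ih =>
      intro v hv
      rw [pow_succ', rmul, ih v hv, map_smul, hAζneg v hv, pow_succ']
      rw [smul_neg, mul_smul, neg_one_smul]
  -- action of arbitrary a i, xa i on W1
  have haiW1 : ∀ (i : ZMod 6), ∀ v ∈ W1, ρ (QuaternionGroup.a i) v = v := by
    intro i v hv
    have : (QuaternionGroup.a i : G) = (QuaternionGroup.a 1) ^ i.val := by
      rw [a_one_pow, ZMod.natCast_rightInverse i]
    rw [this]; exact hpow1 i.val v hv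
  have hxaiW1 : ∀ (i : ZMod 6), ∀ v ∈ W1, ρ (xa i) v = v := by
    intro i v hv
    have : (xa i : G) = xa 0 * QuaternionGroup.a i := by rw [xa_mul_a, zero_add]
    rw [this, rmul, haiW1 i v hv]
    exact (mem1 v).1 hv
  have haiWζ : ∀ (i : ZMod 6), ∀ v ∈ Wζ, ρ (QuaternionGroup.a i) v = ((-1 : k) ^ i.val) • v := by
    intro i v hv
    have : (QuaternionGroup.a i : G) = (QuaternionGroup.a 1) ^ i.val := by
      rw [a_one_pow, ZMod.natCast_rightInverse i]
    rw [this]; exact hpowζ i.val v hv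
  have hxaiWζ : ∀ (i : ZMod 6), ∀ v ∈ Wζ, ρ (xa i) v = (((-1 : k) ^ i.val) * ζ) • v := by
    intro i v hv
    have h : (xa i : G) = xa 0 * QuaternionGroup.a i := by rw [xa_mul_a, zero_add]
    rw [h, rmul, haiWζ i v hv, map_smul, (memζ v).1 hv, smul_smul]
  -- the character
  have huζ : IsUnit ζ := IsUnit.mk0 ζ hζ0
  have huu : huζ.unit * huζ.unit = -1 := by
    ext; push_cast [IsUnit.unit_spec]; exact hζ2
  refine ⟨W1, Wζ, ⟨?_, ?_⟩, h1mult, hζmult, ?_, ?_⟩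
  · -- disjoint
    rw [Submodule.disjoint_def]
    intro x hx1 hxζ
    have e1 : B x = x := (mem1 x).1 hx1
    have e2 : B x = ζ • x := (memζ x).1 hxζ
    have h12 : x = ζ • x := e1.symm.trans e2
    have : (1 - ζ) • x = 0 := by
      rw [sub_smul, one_smul]; exact sub_eq_zero_of_eq h12
    rcases smul_eq_zero.1 this with h | h
    · exact absurd (sub_eq_zero.1 h).symm hζ1
    · exact h
  · -- codisjoint
    rw [codisjoint_iff, sup_comm]
    exact hdiag
  · -- trivial action on W1
    rintro (i | i) v hv
    · exact haiW1 i v hv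
    · exact hxaiW1 i v hv
  · refine ⟨chi huζ.unit huu, ?_, ?_⟩
    · show ((E k 0 * huζ.unit : kˣ) : k) = ζ
      rw [E_zero, one_mul, IsUnit.unit_spec]
    · rintro (i | i) v hv
      · show ρ (QuaternionGroup.a i) v = ((E k i : kˣ) : k) • v
        rw [haiWζ i v hv]
        congr 1
      · show ρ (xa i) v = ((E k i * huζ.unit : kˣ) : k) • v
        rw [hxaiWζ i v hv]
        congr 1
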